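/- Let D ⊂ ℝ^{n-1} be a set satisfying the (n-1)-dimensional volume density condition. Define Ω = B(0,1) \ {(x',0) : x' ∈ ℝ^{n-1} \ D} ⊂ ℝⁿ. Then for every ξ ∈ ∂Ω and R > 0, the (n-1)-dimensional Hausdorff content of closure(B(ξ,R)) \ Ω satisfies H^{n-1}_∞(closure(B(ξ,R)) \ Ω) ≥ R^{n-1}/C for a constant C depending only on n and the density constant of D. -/

import Mathlib

/-!
A boundary point `ξ` of `Ω` lies on the unit sphere or on the closure `{(x', 0) : x' ∈ closure Dᶜ}`
of the slit. Forgetting the last coordinate is `1`-Lipschitz, and the image of a set under a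
`1`-Lipschitz map to `ℝ^(n-1)` has measure at most the `(n-1)`-dimensional Hausdorff content of the
set times the volume of the unit ball; so it suffices to bound below the measure of the projection
of `closedBall ξ R \ Ω`. For `‖ξ‖ = 1` the projection contains a ball of radius `R / 2`, the shadow
of the ball of that radius about `(1 + R / 2) ξ`, which lies outside the unit ball. For
`ξ = (x', 0)` it contains `closedBall x' R \ D`, which has measure `≳ R^(n-1)` by the density
condition at a point of `frontier D` within `R / 2` of `x'`, or, if there is no such point,
because the connected set `ball x' (R / 2)` then lies in `Dᶜ`.
-/

open MeasureTheory Metric Set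
open scoped ENNReal

/-- The `s`-dimensional Hausdorff content of a set in a metric space. -/
noncomputable def hausdorffContent {X : Type*} [MetricSpace X] (s : ℝ) (E : Set X) :
    ℝ≥0∞ :=
  sInf { m : ℝ≥0∞ | ∃ (c : ℕ → X) (r : ℕ → ℝ), (∀ i, 0 < r i) ∧
    E ⊆ ⋃ i, Metric.ball (c i) (r i) ∧ m = ∑' i, ENNReal.ofReal (r i ^ s) }

/-- The natural isometric embedding `ℝ^(n-1) → ℝⁿ` as the hyperplane `{xₙ = 0}`. -/
noncomputable def emb (n : ℕ) (x : EuclideanSpace ℝ (Fin (n - 1))) :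
    EuclideanSpace ℝ (Fin n) :=
  WithLp.toLp 2 (fun i : Fin n => if h : (i : ℕ) < n - 1 then x ⟨i, h⟩ else 0)

theorem IsPreconnected.subset_interior_of_disjoint_frontier {X : Type*} [TopologicalSpace X]
    {s t : Set X} (hs : IsPreconnected s) (hst : Disjoint s (frontier t)) {x : X}
    (hxs : x ∈ s) (hxt : x ∈ closure t) : s ⊆ interior t := by
  have hint : s ∩ closure t ⊆ interior t := fun y ⟨hys, hyt⟩ => by
    rw [closure_eq_interior_union_frontier] at hyt
    exact hyt.resolve_right (hst.notMem_of_mem_left hys)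
  refine hs.subset_of_closure_inter_subset isOpen_interior ⟨x, hxs, hint ⟨hxs, hxt⟩⟩ ?_
  rw [inter_comm]
  exact (inter_subset_inter_right s (closure_mono interior_subset)).trans hint

theorem frontier_sdiff_subset {X : Type*} [TopologicalSpace X] (s t : Set X) :
    frontier (s \ t) ⊆ frontier s ∪ frontier t := by
  refine (frontier_inter_subset s tᶜ).trans ?_
  rw [frontier_compl]
  exact union_subset_union inter_subset_left inter_subset_right

theorem min_le_measure_closedBall_diff {E : Type*} [NormedAddCommGroup E] [NormedSpace ℝ E]
    [MeasurableSpace E] (μ : Measure E) {D : Set E} {d : ℕ} {C' : ℝ}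
    (hVDC : ∀ η ∈ frontier D, ∀ R : ℝ, 0 < R →
      ENNReal.ofReal (R ^ d / C') ≤ μ (closedBall η R \ D))
    {x : E} (hx : x ∈ closure Dᶜ) {R : ℝ} (hR : 0 < R) :
    ENNReal.ofReal ((R / 2) ^ d / C') ⊓ μ (ball x (R / 2)) ≤ μ (closedBall x R \ D) := by
  by_cases hfr : ∃ η ∈ frontier D, η ∈ closedBall x (R / 2)
  · obtain ⟨η, hηD, hηx⟩ := hfr
    have hsub : closedBall η (R / 2) \ D ⊆ closedBall x R \ D :=
      sdiff_subset_sdiff_left <|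
        closedBall_subset_closedBall' (by rw [mem_closedBall] at hηx; linarith)
    exact inf_le_left.trans ((hVDC η hηD _ (half_pos hR)).trans (measure_mono hsub))
  · push Not at hfr
    have hball : ball x (R / 2) ⊆ interior Dᶜ :=
      (convex_ball x _).isPreconnected.subset_interior_of_disjoint_frontier
        (by rw [frontier_compl]; exact disjoint_left.2 fun y hy hyD =>
          hfr y hyD (ball_subset_closedBall hy))
        (mem_ball_self (half_pos hR)) hx
    refine inf_le_right.trans (measure_mono fun y hy => ⟨?_, interior_subset (hball hy)⟩)
    exact ball_subset_closedBall (ball_subset_ball (by linarith) hy)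

theorem measure_image_le_hausdorffContent_mul {X F : Type*} [MetricSpace X]
    [NormedAddCommGroup F] [NormedSpace ℝ F] [FiniteDimensional ℝ F] [MeasurableSpace F]
    [BorelSpace F] (μ : Measure F) [μ.IsAddHaarMeasure] {f : X → F} (hf : LipschitzWith 1 f)
    (E : Set X) :
    μ (f '' E) ≤ hausdorffContent (Module.finrank ℝ F) E * μ (ball 0 1) := by
  have hV0 : μ (ball 0 1) ≠ 0 := (measure_ball_pos _ _ one_pos).ne'
  have hVt : μ (ball 0 1) ≠ ⊤ := measure_ball_lt_top.ne
  rw [← ENNReal.div_le_iff hV0 hVt]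
  refine le_sInf ?_
  rintro _ ⟨c, r, hr, hcov, rfl⟩
  rw [ENNReal.div_le_iff hV0 hVt]
  calc μ (f '' E)
      ≤ μ (⋃ i, ball (f (c i)) (r i)) := by
        refine measure_mono ((image_mono hcov).trans ?_)
        rw [image_iUnion]
        exact iUnion_mono fun i => by
          simpa using (hf.mapsTo_ball one_ne_zero (c i) (r i)).image_subset
    _ ≤ ∑' i, μ (ball (f (c i)) (r i)) := measure_iUnion_le _
    _ = (∑' i, ENNReal.ofReal (r i ^ (Module.finrank ℝ F : ℝ))) * μ (ball 0 1) := by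
        rw [← ENNReal.tsum_mul_right]
        refine tsum_congr fun i => ?_
        rw [Measure.addHaar_ball_of_pos _ _ (hr i), Real.rpow_natCast]

theorem ball_smul_subset_closedBall_diff_ball {E : Type*} [NormedAddCommGroup E]
    [NormedSpace ℝ E] {ξ : E} (hξ : ‖ξ‖ = 1) {R : ℝ} (hR : 0 < R) :
    ball ((1 + R / 2) • ξ) (R / 2) ⊆ closedBall ξ R \ ball 0 1 := by
  have hdist : dist ((1 + R / 2) • ξ) ξ = R / 2 := by
    rw [dist_eq_norm, add_smul, one_smul, add_sub_cancel_left, norm_smul, hξ, mul_one,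
      Real.norm_of_nonneg (by positivity)]
  have hnorm : ‖(1 + R / 2) • ξ‖ = 1 + R / 2 := by
    rw [norm_smul, hξ, mul_one, Real.norm_of_nonneg (by positivity)]
  intro z hz
  rw [mem_ball] at hz
  refine ⟨mem_closedBall.2 (by linarith [dist_triangle z ((1 + R / 2) • ξ) ξ]), ?_⟩
  rw [mem_ball_zero_iff, not_lt]
  linarith [norm_sub_norm_le ((1 + R / 2) • ξ) z, dist_eq_norm z ((1 + R / 2) • ξ),
    norm_sub_rev z ((1 + R / 2) • ξ)]

namespace EuclideanSpace

variable {m : ℕ}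

noncomputable def dropLast (x : EuclideanSpace ℝ (Fin (m + 1))) : EuclideanSpace ℝ (Fin m) :=
  WithLp.toLp 2 fun i => x i.castSucc

@[simp]
theorem dropLast_apply (x : EuclideanSpace ℝ (Fin (m + 1))) (i : Fin m) :
    dropLast x i = x i.castSucc :=
  rfl

theorem dist_sq_eq_dist_dropLast_sq_add (a b : EuclideanSpace ℝ (Fin (m + 1))) :
    dist a b ^ 2 =
      dist (dropLast a) (dropLast b) ^ 2 + dist (a (Fin.last m)) (b (Fin.last m)) ^ 2 := by
  simp only [EuclideanSpace.dist_sq_eq, Fin.sum_univ_castSucc, dropLast_apply]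

theorem lipschitzWith_dropLast : LipschitzWith 1 (dropLast (m := m)) :=
  LipschitzWith.of_dist_le_mul fun a b => by
    rw [NNReal.coe_one, one_mul]
    refine (pow_le_pow_iff_left₀ dist_nonneg dist_nonneg two_ne_zero).1 ?_
    rw [dist_sq_eq_dist_dropLast_sq_add]
    exact le_add_of_nonneg_right (sq_nonneg _)

theorem dist_eq_dist_dropLast {a b : EuclideanSpace ℝ (Fin (m + 1))}
    (h : a (Fin.last m) = b (Fin.last m)) : dist a b = dist (dropLast a) (dropLast b) := by
  rw [← pow_left_inj₀ dist_nonneg dist_nonneg two_ne_zero, dist_sq_eq_dist_dropLast_sq_add, h,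
    dist_self, zero_pow two_ne_zero, add_zero]

theorem ball_dropLast_subset_image (c : EuclideanSpace ℝ (Fin (m + 1))) (r : ℝ) :
    ball (dropLast c) r ⊆ dropLast '' ball c r := by
  intro y hy
  let z : EuclideanSpace ℝ (Fin (m + 1)) := WithLp.toLp 2 (Fin.snoc y (c (Fin.last m)))
  have hz : dropLast z = y := by ext i; simp [z]
  refine ⟨z, ?_, hz⟩
  rw [mem_ball, dist_eq_dist_dropLast (by simp [z]), hz]
  exact hy

@[simp]
theorem emb_castSucc (x : EuclideanSpace ℝ (Fin m)) (i : Fin m) :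
    emb (m + 1) x i.castSucc = x i := by
  simp [emb]

@[simp]
theorem emb_last (x : EuclideanSpace ℝ (Fin m)) : emb (m + 1) x (Fin.last m) = 0 := by
  simp [emb]

@[simp]
theorem dropLast_emb (x : EuclideanSpace ℝ (Fin m)) : dropLast (emb (m + 1) x) = x := by
  ext i; simp

theorem isometry_emb : Isometry (emb (m + 1) : EuclideanSpace ℝ (Fin m) → _) :=
  Isometry.of_dist_eq fun x y => by rw [dist_eq_dist_dropLast (by simp), dropLast_emb, dropLast_emb]

end EuclideanSpace

open EuclideanSpace

noncomputable def slitBall {m : ℕ} (D : Set (EuclideanSpace ℝ (Fin m))) :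
    Set (EuclideanSpace ℝ (Fin (m + 1))) :=
  ball 0 1 \ emb (m + 1) '' Dᶜ

section SlitBall

variable {m : ℕ} {D : Set (EuclideanSpace ℝ (Fin m))}

theorem frontier_slitBall_subset :
    frontier (slitBall D) ⊆ sphere 0 1 ∪ emb (m + 1) '' closure Dᶜ := by
  refine (frontier_sdiff_subset _ _).trans (union_subset_union (frontier_ball 0 one_ne_zero).le ?_)
  rw [← isometry_emb.isClosedEmbedding.closure_image_eq]
  exact frontier_subset_closure

theorem min_le_volume_dropLast_image {C' : ℝ}
    (hVDC : ∀ η ∈ frontier D, ∀ R : ℝ, 0 < R →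
      ENNReal.ofReal (R ^ m / C') ≤ volume (closedBall η R \ D))
    {ξ : EuclideanSpace ℝ (Fin (m + 1))} (hξ : ξ ∈ frontier (slitBall D))
    {R : ℝ} (hR : 0 < R) :
    ENNReal.ofReal ((R / 2) ^ m / C') ⊓
        ENNReal.ofReal ((R / 2) ^ m) * volume (ball (0 : EuclideanSpace ℝ (Fin m)) 1) ≤
      volume (dropLast '' (closedBall ξ R \ slitBall D)) := by
  have hball (x : EuclideanSpace ℝ (Fin m)) : volume (ball x (R / 2)) =
      ENNReal.ofReal ((R / 2) ^ m) * volume (ball (0 : EuclideanSpace ℝ (Fin m)) 1) := by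
    rw [Measure.addHaar_ball_of_pos _ _ (half_pos hR), finrank_euclideanSpace_fin]
  rcases frontier_slitBall_subset hξ with hsphere | ⟨x, hx, rfl⟩
  · rw [← hball (dropLast ((1 + R / 2) • ξ))]
    refine inf_le_right.trans (measure_mono ((ball_dropLast_subset_image _ _).trans
      (image_mono ?_)))
    exact (ball_smul_subset_closedBall_diff_ball (mem_sphere_zero_iff_norm.1 hsphere) hR).trans
      (sdiff_subset_sdiff_right sdiff_subset)
  · rw [← hball x]
    refine (min_le_measure_closedBall_diff volume hVDC hx hR).trans (measure_mono ?_)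
    rintro y ⟨hy, hyD⟩
    refine ⟨emb (m + 1) y, ⟨?_, fun h => h.2 ⟨y, hyD, rfl⟩⟩, dropLast_emb y⟩
    rwa [mem_closedBall, isometry_emb.dist_eq]

end SlitBall

theorem ofReal_div_mul_le_min {m : ℕ} {C' v R : ℝ} (hC' : 0 < C') (hv : 0 < v) (hR : 0 < R) :
    ENNReal.ofReal (R ^ m / (2 ^ m * max (C' * v) 1)) * ENNReal.ofReal v ≤
      ENNReal.ofReal ((R / 2) ^ m / C') ⊓ ENNReal.ofReal ((R / 2) ^ m) * ENNReal.ofReal v := by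
  have hM : 0 < max (C' * v) 1 := lt_max_of_lt_right one_pos
  have hsplit : R ^ m / (2 ^ m * max (C' * v) 1) * v = (R / 2) ^ m * (v / max (C' * v) 1) := by
    rw [div_pow]; field_simp
  rw [← ENNReal.ofReal_mul (by positivity), ← ENNReal.ofReal_mul (by positivity), hsplit]
  refine le_inf (ENNReal.ofReal_le_ofReal ?_) (ENNReal.ofReal_le_ofReal ?_)
  · rw [div_eq_mul_one_div _ C']
    refine mul_le_mul_of_nonneg_left ?_ (by positivity)
    rw [div_le_div_iff₀ hM hC', one_mul, mul_comm]
    exact le_max_left _ _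
  · exact mul_le_mul_of_nonneg_left (div_le_self hv.le (le_max_right _ _)) (by positivity)

/-- if `D ⊆ ℝ^(n-1)` satisfies the `(n-1)`-dimensional volume density
condition, then `Ω = B(0,1) \ {(x',0) : x' ∉ D}` satisfies the Hausdorff content
density bound `H^{n-1}_∞(closedBall(ξ,R) \ Ω) ≥ R^(n-1)/C` at every `ξ ∈ ∂Ω`. -/
theorem stmt14 (n : ℕ) (hn : 2 ≤ n) (D : Set (EuclideanSpace ℝ (Fin (n - 1))))
    (C' : ℝ) (hC' : 0 < C')
    (hVDC : ∀ η ∈ frontier D, ∀ R : ℝ, 0 < R →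
      ENNReal.ofReal (R ^ (n - 1) / C') ≤ volume (closedBall η R \ D)) :
    ∃ C : ℝ, 0 < C ∧
      ∀ ξ ∈ frontier (ball (0 : EuclideanSpace ℝ (Fin n)) 1 \ emb n '' Dᶜ),
      ∀ R : ℝ, 0 < R →
        ENNReal.ofReal (R ^ (n - 1) / C) ≤
          hausdorffContent ((n : ℝ) - 1)
            (closedBall ξ R \ (ball (0 : EuclideanSpace ℝ (Fin n)) 1 \ emb n '' Dᶜ)) := by
  obtain ⟨m, rfl⟩ : ∃ m, n = m + 1 := ⟨n - 1, by omega⟩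
  set V := volume (ball (0 : EuclideanSpace ℝ (Fin m)) 1)
  have hV0 : V ≠ 0 := (measure_ball_pos _ _ one_pos).ne'
  have hVt : V ≠ ⊤ := measure_ball_lt_top.ne
  refine ⟨2 ^ m * max (C' * V.toReal) 1, by positivity, fun ξ hξ R hR => ?_⟩
  have hdim : ((m + 1 : ℕ) : ℝ) - 1 = Module.finrank ℝ (EuclideanSpace ℝ (Fin m)) := by simp
  rw [hdim, ← ENNReal.mul_le_mul_iff_left hV0 hVt]
  calc ENNReal.ofReal (R ^ m / (2 ^ m * max (C' * V.toReal) 1)) * V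
      ≤ ENNReal.ofReal ((R / 2) ^ m / C') ⊓ ENNReal.ofReal ((R / 2) ^ m) * V := by
        simpa only [ENNReal.ofReal_toReal hVt] using
          ofReal_div_mul_le_min (m := m) hC' (ENNReal.toReal_pos hV0 hVt) hR
    _ ≤ volume (dropLast '' (closedBall ξ R \ slitBall D)) :=
        min_le_volume_dropLast_image hVDC hξ hR
    _ ≤ _ := measure_image_le_hausdorffContent_mul volume lipschitzWith_dropLast _
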